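/- arXiv:1405.4550 — 2 statements merged into one kernel-verified Lean document; each statement's English description precedes it below -/
import Mathlib

section
/- Let Ω ⊆ ℝⁿ be an open connected set and let E ⊆ Ω be a Lebesgue measurable set with 0 < |E| and |Ω \ E| > 0 (where |·| denotes Lebesgue measure). Then there exists a continuously differentiable vector field Y : ℝⁿ → ℝⁿ with compact support contained in Ω such that ∫_E div Y(x) dx = 1. -/
open MeasureTheory Metric Set Filter
open scoped ENNReal Topology

/-- The divergence of a vector field: the trace of its derivative. -/
noncomputable def divergence {n : ℕ}
    (Y : EuclideanSpace ℝ (Fin n) → EuclideanSpace ℝ (Fin n))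
    (x : EuclideanSpace ℝ (Fin n)) : ℝ :=
  LinearMap.trace ℝ (EuclideanSpace ℝ (Fin n)) (fderiv ℝ Y x)

/-!
Take points `a ∈ E` and `b ∈ Ω \ E` at which the mollifications of `𝟙_E` by shrinking normalized
bumps converge to `1` and `0` respectively (Lebesgue differentiation). For a bump `ρ` and a
segment with `[p, q] + supp ρ ⊆ Ω`, the field `x ↦ (∫₀¹ ρ (x - q - t (p - q)) dt) • (q - p)` is
supported in `Ω` and has divergence `ρ (· - p) - ρ (· - q)`. Summing such fields along a chain of
short segments from `a` to `b` in the connected open set `Ω` gives a test field with divergence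
`ρ (· - a) - ρ (· - b)`, whose integral over `E` is positive once `ρ` is small; rescale it.
-/

open scoped Pointwise

section Divergence

variable {n : ℕ} {Y Z : EuclideanSpace ℝ (Fin n) → EuclideanSpace ℝ (Fin n)}
  {x : EuclideanSpace ℝ (Fin n)}

lemma divergence_smul_const {g : EuclideanSpace ℝ (Fin n) → ℝ}
    {ℓ : EuclideanSpace ℝ (Fin n) →L[ℝ] ℝ} (h : HasFDerivAt g ℓ x) (u : EuclideanSpace ℝ (Fin n)) :
    divergence (fun y ↦ g y • u) x = ℓ u := by
  rw [divergence, (h.smul_const u).fderiv]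
  exact LinearMap.trace_smulRight (ℓ : EuclideanSpace ℝ (Fin n) →ₗ[ℝ] ℝ) u

lemma divergence_add (hY : DifferentiableAt ℝ Y x) (hZ : DifferentiableAt ℝ Z x) :
    divergence (fun y ↦ Y y + Z y) x = divergence Y x + divergence Z x := by
  simp [divergence, fderiv_fun_add hY hZ]

lemma divergence_const_smul (hY : DifferentiableAt ℝ Y x) (c : ℝ) :
    divergence (fun y ↦ c • Y y) x = c * divergence Y x := by
  simp [divergence, fderiv_fun_const_smul hY]

end Divergence

section SegmentIntegral

variable {V : Type*} [NormedAddCommGroup V] [NormedSpace ℝ V] {ρ : V → ℝ}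

lemma hasFDerivAt_intervalIntegral_comp_sub (hρ : ContDiff ℝ 1 ρ) (hρc : HasCompactSupport ρ)
    {γ : ℝ → V} (hγ : Continuous γ) (a b : ℝ) (x : V) :
    HasFDerivAt (fun x ↦ ∫ t in a..b, ρ (x - γ t))
      (∫ t in a..b, fderiv ℝ ρ (x - γ t)) x := by
  have hρ' : Continuous (fderiv ℝ ρ) := hρ.continuous_fderiv one_ne_zero
  obtain ⟨C, hC⟩ : ∃ C, ∀ z, ‖fderiv ℝ ρ z‖ ≤ C :=
    (hρc.fderiv (𝕜 := ℝ)).exists_bound_of_continuous hρ'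
  refine intervalIntegral.hasFDerivAt_integral_of_dominated_of_fderiv_le
    (F' := fun y t ↦ fderiv ℝ ρ (y - γ t)) (bound := fun _ ↦ C) univ_mem
    (Eventually.of_forall fun y ↦ ?_) ?_ ?_ (ae_of_all _ fun t _ y _ ↦ hC _)
    intervalIntegrable_const (ae_of_all _ fun t _ y _ ↦ ?_)
  · exact (hρ.continuous.comp (by fun_prop)).aestronglyMeasurable
  · exact (hρ.continuous.comp (by fun_prop)).intervalIntegrable _ _
  · exact (hρ'.comp (by fun_prop)).aestronglyMeasurable
  · simpa [Function.comp_def] using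
      ((hρ.differentiable one_ne_zero) _).hasFDerivAt.comp y ((hasFDerivAt_id y).sub_const (γ t))

lemma contDiff_intervalIntegral_comp_sub (hρ : ContDiff ℝ 1 ρ) (hρc : HasCompactSupport ρ)
    {γ : ℝ → V} (hγ : Continuous γ) (a b : ℝ) :
    ContDiff ℝ 1 (fun x ↦ ∫ t in a..b, ρ (x - γ t)) := by
  have hderiv := hasFDerivAt_intervalIntegral_comp_sub hρ hρc hγ a b
  rw [contDiff_one_iff_fderiv, funext fun x ↦ (hderiv x).fderiv]
  refine ⟨fun x ↦ (hderiv x).differentiableAt, ?_⟩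
  have hρ' : Continuous (fderiv ℝ ρ) := hρ.continuous_fderiv one_ne_zero
  exact intervalIntegral.continuous_parametric_intervalIntegral_of_continuous'
    (f := fun y t ↦ fderiv ℝ ρ (y - γ t)) (hρ'.comp (by fun_prop)) a b

lemma intervalIntegral_fderiv_comp_sub_lineMap_apply (hρ : ContDiff ℝ 1 ρ) (p q x : V) :
    (∫ t in (0 : ℝ)..1, fderiv ℝ ρ (x - AffineMap.lineMap q p t)) (q - p)
      = ρ (x - p) - ρ (x - q) := by
  have hρ' : Continuous (fderiv ℝ ρ) := hρ.continuous_fderiv one_ne_zero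
  have hcont : Continuous fun t : ℝ ↦ fderiv ℝ ρ (x - AffineMap.lineMap q p t) :=
    hρ'.comp (by fun_prop)
  have hderiv : ∀ t ∈ uIcc (0 : ℝ) 1, HasDerivAt (fun s ↦ ρ (x - AffineMap.lineMap q p s))
      (fderiv ℝ ρ (x - AffineMap.lineMap q p t) (q - p)) t := fun t _ ↦ by
    simpa [Function.comp_def] using
      ((hρ.differentiable one_ne_zero) _).hasFDerivAt.comp_hasDerivAt t
        ((AffineMap.hasDerivAt_lineMap (a := q) (b := p) (x := t)).const_sub x)
  rw [ContinuousLinearMap.intervalIntegral_apply (hcont.intervalIntegrable 0 1),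
    intervalIntegral.integral_eq_sub_of_hasDerivAt hderiv
      (((ContinuousLinearMap.apply ℝ ℝ (q - p)).continuous.comp hcont).intervalIntegrable 0 1)]
  simp only [AffineMap.lineMap_apply_zero, AffineMap.lineMap_apply_one]

lemma isCompact_segment (p q : V) :
    IsCompact (segment ℝ p q) := by
  rw [segment_eq_image_lineMap]
  exact isCompact_Icc.image AffineMap.lineMap_continuous

lemma tsupport_intervalIntegral_comp_sub_lineMap_subset (hρc : HasCompactSupport ρ) (p q : V) :
    tsupport (fun x ↦ ∫ t in (0 : ℝ)..1, ρ (x - AffineMap.lineMap q p t))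
      ⊆ segment ℝ p q + tsupport ρ := by
  refine closure_minimal (fun x hx ↦ ?_) ((isCompact_segment p q).add hρc).isClosed
  by_contra hxK
  refine hx ((intervalIntegral.integral_congr (g := fun _ ↦ 0) fun t ht ↦
    image_eq_zero_of_notMem_tsupport ?_).trans intervalIntegral.integral_zero)
  rw [uIcc_of_le zero_le_one] at ht
  refine fun hxt ↦ hxK ⟨_, ?_, _, hxt, add_sub_cancel _ x⟩
  rw [segment_symm, segment_eq_image_lineMap]
  exact mem_image_of_mem _ ht

end SegmentIntegral

section TestField

variable {V : Type*} [NormedAddCommGroup V] [NormedSpace ℝ V]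

def IsTestField (Ω : Set V) (Y : V → V) : Prop :=
  ContDiff ℝ 1 Y ∧ HasCompactSupport Y ∧ tsupport Y ⊆ Ω

variable {Ω : Set V} {Y Z : V → V}

lemma IsTestField.add (hY : IsTestField Ω Y) (hZ : IsTestField Ω Z) :
    IsTestField Ω (fun x ↦ Y x + Z x) :=
  ⟨hY.1.add hZ.1, hY.2.1.add hZ.2.1,
    (tsupport_add Y Z).trans (union_subset hY.2.2 hZ.2.2)⟩

lemma IsTestField.const_smul (hY : IsTestField Ω Y) (c : ℝ) :
    IsTestField Ω (fun x ↦ c • Y x) :=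
  ⟨hY.1.const_smul c, hY.2.1.smul_left, (tsupport_smul_subset_right _ _).trans hY.2.2⟩

end TestField

lemma IsTestField.exists_setIntegral_divergence_eq_one {n : ℕ}
    {Ω E : Set (EuclideanSpace ℝ (Fin n))} {μ : Measure (EuclideanSpace ℝ (Fin n))}
    {Y : EuclideanSpace ℝ (Fin n) → EuclideanSpace ℝ (Fin n)}
    (hY : IsTestField Ω Y) (h : ∫ x in E, divergence Y x ∂μ ≠ 0) :
    ∃ Y', IsTestField Ω Y' ∧ ∫ x in E, divergence Y' x ∂μ = 1 := by
  refine ⟨fun x ↦ (∫ x in E, divergence Y x ∂μ)⁻¹ • Y x, hY.const_smul _, ?_⟩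
  simp_rw [divergence_const_smul ((hY.1.differentiable one_ne_zero) _), integral_const_mul,
    inv_mul_cancel₀ h]

section Transport

variable {n : ℕ}

def TransportsBumps (Ω : Set (EuclideanSpace ℝ (Fin n))) (δ : ℝ)
    (p q : EuclideanSpace ℝ (Fin n)) : Prop :=
  ∀ ρ : EuclideanSpace ℝ (Fin n) → ℝ, ContDiff ℝ 1 ρ → tsupport ρ ⊆ closedBall 0 δ →
    ∃ Y, IsTestField Ω Y ∧ ∀ x, divergence Y x = ρ (x - p) - ρ (x - q)

variable {Ω : Set (EuclideanSpace ℝ (Fin n))} {δ : ℝ} {p q r : EuclideanSpace ℝ (Fin n)}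

lemma TransportsBumps.mono {δ' : ℝ} (h : TransportsBumps Ω δ p q) (hδ : δ' ≤ δ) :
    TransportsBumps Ω δ' p q :=
  fun ρ hρ hρδ ↦ h ρ hρ (hρδ.trans (closedBall_subset_closedBall hδ))

lemma TransportsBumps.trans (hpq : TransportsBumps Ω δ p q) (hqr : TransportsBumps Ω δ q r) :
    TransportsBumps Ω δ p r := by
  intro ρ hρ hρδ
  obtain ⟨Y, hY, hdivY⟩ := hpq ρ hρ hρδ
  obtain ⟨Z, hZ, hdivZ⟩ := hqr ρ hρ hρδ
  refine ⟨fun x ↦ Y x + Z x, hY.add hZ, fun x ↦ ?_⟩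
  rw [divergence_add ((hY.1.differentiable one_ne_zero) x) ((hZ.1.differentiable one_ne_zero) x),
    hdivY, hdivZ]
  ring

lemma transportsBumps_of_segment_add_closedBall_subset
    (h : segment ℝ p q + closedBall (0 : EuclideanSpace ℝ (Fin n)) δ ⊆ Ω) :
    TransportsBumps Ω δ p q := by
  intro ρ hρ hρδ
  have hρc : HasCompactSupport ρ :=
    (isCompact_closedBall 0 δ).of_isClosed_subset (isClosed_tsupport ρ) hρδ
  have hγ : Continuous (AffineMap.lineMap q p : ℝ → EuclideanSpace ℝ (Fin n)) :=
    AffineMap.lineMap_continuous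
  set Y := fun x ↦ (∫ t in (0 : ℝ)..1, ρ (x - AffineMap.lineMap q p t)) • (q - p)
  have hYK : tsupport Y ⊆ segment ℝ p q + closedBall 0 δ :=
    (tsupport_smul_subset_left _ _).trans
      ((tsupport_intervalIntegral_comp_sub_lineMap_subset hρc p q).trans (add_subset_add_left hρδ))
  refine ⟨Y, ⟨(contDiff_intervalIntegral_comp_sub hρ hρc hγ 0 1).smul contDiff_const,
    ((isCompact_segment p q).add (isCompact_closedBall 0 δ)).of_isClosed_subset
      (isClosed_tsupport Y) hYK, hYK.trans h⟩, fun x ↦ ?_⟩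
  rw [divergence_smul_const (hasFDerivAt_intervalIntegral_comp_sub hρ hρc hγ 0 1 x),
    intervalIntegral_fderiv_comp_sub_lineMap_apply hρ]

lemma eventually_transportsBumps (hΩ : IsOpen Ω) (hp : p ∈ Ω) :
    ∃ δ > 0, ∀ᶠ q in 𝓝 p, TransportsBumps Ω δ p q ∧ TransportsBumps Ω δ q p := by
  obtain ⟨ε, hε, hball⟩ := Metric.isOpen_iff.1 hΩ p hp
  refine ⟨ε / 3, by positivity, ?_⟩
  filter_upwards [ball_mem_nhds p (by positivity : 0 < ε / 3)] with q hq
  have hsub : segment ℝ p q + closedBall (0 : EuclideanSpace ℝ (Fin n)) (ε / 3) ⊆ Ω := calc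
    _ ⊆ closedBall p (ε / 3) + closedBall (0 : EuclideanSpace ℝ (Fin n)) (ε / 3) :=
      add_subset_add_right ((convex_closedBall p _).segment_subset (mem_closedBall_self
        (by positivity)) (ball_subset_closedBall hq))
    _ = closedBall p (ε / 3 + ε / 3) := by
      rw [closedBall_add_closedBall (by positivity) (by positivity), add_zero]
    _ ⊆ Ω := (closedBall_subset_ball (by linarith)).trans hball
  exact ⟨transportsBumps_of_segment_add_closedBall_subset hsub,
    transportsBumps_of_segment_add_closedBall_subset (segment_symm ℝ p q ▸ hsub)⟩

lemma exists_transportsBumps (hΩo : IsOpen Ω) (hΩc : IsPreconnected Ω) (hp : p ∈ Ω)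
    (hq : q ∈ Ω) : ∃ δ > 0, TransportsBumps Ω δ p q := by
  refine hΩc.induction₂' (fun p q ↦ ∃ δ > 0, TransportsBumps Ω δ p q) (fun x hx ↦ ?_)
    (fun x y z _ _ _ ⟨δ, hδ, hxy⟩ ⟨δ', hδ', hyz⟩ ↦ ⟨min δ δ', lt_min hδ hδ',
      (hxy.mono (min_le_left _ _)).trans (hyz.mono (min_le_right _ _))⟩) hp hq
  obtain ⟨δ, hδ, h⟩ := eventually_transportsBumps hΩo hx
  exact (h.filter_mono nhdsWithin_le_nhds).mono fun y hy ↦ ⟨⟨δ, hδ, hy.1⟩, ⟨δ, hδ, hy.2⟩⟩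

end Transport

section ShrinkingBump

variable {V : Type*} [NormedAddCommGroup V]

noncomputable def shrinkingBump (k : ℕ) : ContDiffBump (0 : V) where
  rIn := 1 / (2 * (k + 1))
  rOut := 1 / (k + 1)
  rIn_pos := by positivity
  rIn_lt_rOut := by gcongr; linarith

lemma tendsto_shrinkingBump_rOut :
    Tendsto (fun k ↦ (shrinkingBump k : ContDiffBump (0 : V)).rOut) atTop (𝓝 0) :=
  tendsto_one_div_add_atTop_nhds_zero_nat

lemma ae_tendsto_setIntegral_shrinkingBump [NormedSpace ℝ V] [FiniteDimensional ℝ V]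
    [MeasurableSpace V] [BorelSpace V] (μ : Measure V) [μ.IsAddHaarMeasure] {S : Set V}
    (hS : MeasurableSet S) :
    ∀ᵐ x ∂μ, Tendsto (fun k ↦ ∫ y in S, (shrinkingBump k).normed μ (y - x) ∂μ) atTop
      (𝓝 (S.indicator 1 x)) := by
  filter_upwards [ContDiffBump.ae_convolution_tendsto_right_of_locallyIntegrable (K := 2)
    tendsto_shrinkingBump_rOut
    (Eventually.of_forall fun k ↦ le_of_eq (by simp only [shrinkingBump]; field_simp))
    ((locallyIntegrable_const (1 : ℝ)).indicator hS)] with x hx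
  refine hx.congr fun k ↦ ?_
  rw [convolution_eq_swap, ← integral_indicator hS]
  congr 1 with y
  rw [← neg_sub y x, ContDiffBump.normed_neg]
  by_cases hy : y ∈ S <;> simp [hy]

end ShrinkingBump

/-- Lemma 3.2: given an open connected `Ω ⊆ ℝⁿ` and a measurable `E ⊆ Ω` with
`0 < |E|` and `|Ω \ E| > 0`, there exists a `C¹` vector field `Y` with compact
support contained in `Ω` such that `∫_E div Y = 1`. -/
theorem stmt0 {n : ℕ} (Ω E : Set (EuclideanSpace ℝ (Fin n)))
    (hΩo : IsOpen Ω) (hΩc : IsConnected Ω)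
    (hEm : MeasurableSet E) (hEΩ : E ⊆ Ω)
    (h1 : 0 < volume E) (h2 : 0 < volume (Ω \ E)) :
    ∃ Y : EuclideanSpace ℝ (Fin n) → EuclideanSpace ℝ (Fin n),
      ContDiff ℝ 1 Y ∧ HasCompactSupport Y ∧ tsupport Y ⊆ Ω ∧
      ∫ x in E, divergence Y x = 1 := by
  have hlim := ae_tendsto_setIntegral_shrinkingBump volume hEm
  obtain ⟨a, haE, ha⟩ :=
    Measure.exists_mem_of_measure_ne_zero_of_ae h1.ne' (ae_restrict_of_ae hlim)
  obtain ⟨b, hbΩE, hb⟩ :=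
    Measure.exists_mem_of_measure_ne_zero_of_ae h2.ne' (ae_restrict_of_ae hlim)
  rw [indicator_of_mem haE, Pi.one_apply] at ha
  rw [indicator_of_notMem hbΩE.2] at hb
  obtain ⟨δ, hδ, hab⟩ := exists_transportsBumps hΩo hΩc.isPreconnected (hEΩ haE) hbΩE.1
  obtain ⟨k, hkδ, hka, hkb⟩ :=
    (((tendsto_shrinkingBump_rOut (V := EuclideanSpace ℝ (Fin n))).eventually
      (eventually_le_nhds hδ)).and ((ha.eventually (eventually_gt_nhds one_half_lt_one)).and
        (hb.eventually (eventually_lt_nhds one_half_pos)))).exists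
  set φ : ContDiffBump (0 : EuclideanSpace ℝ (Fin n)) := shrinkingBump k
  set ρ := φ.normed volume
  obtain ⟨Y, hY, hdiv⟩ := hab ρ φ.contDiff_normed
    (φ.tsupport_normed_eq.trans_subset (closedBall_subset_closedBall hkδ))
  have hρ (p) : IntegrableOn (fun x ↦ ρ (x - p)) E :=
    (φ.integrable_normed.comp_sub_right p).integrableOn
  have hdivE : ∫ x in E, divergence Y x = (∫ x in E, ρ (x - a)) - ∫ x in E, ρ (x - b) := by
    simp_rw [hdiv]
    exact integral_sub (hρ a) (hρ b)
  obtain ⟨Y', ⟨hY'C, hY'K, hY'Ω⟩, hY'⟩ :=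
    hY.exists_setIntegral_divergence_eq_one (by rw [hdivE]; linarith)
  exact ⟨Y', hY'C, hY'K, hY'Ω, hY'⟩
end

section
/- Let μ be a locally finite, outer regular Borel measure on ℝⁿ, let k > 0, and suppose there exist constants c > 0 and δ > 0 and a set T ⊆ ℝⁿ such that μ(B_ρ(y)) ≥ c ρ^k for every y ∈ T and every ρ ∈ (0,δ). If S is a subset of the closure of T with μ(S) = 0, then the k-dimensional Hausdorff measure of S vanishes: H^k(S) = 0. -/
open MeasureTheory Metric Set Filter
open scoped ENNReal Topology

/-!
Each point `x` of `S ⊆ closure T` has a point of `T` within `r / 2`, so the closed ball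
`closedBall x r` contains a ball of radius `r / 2` centred in `T` and therefore has
`diam ^ k ≤ (4 ^ k / c) μ`. Besicovitch's covering theorem covers `S` by such balls, of arbitrarily
small radii, with total measure at most `μ S + ε`; hence `μH[k] S ≤ (4 ^ k / c) μ S`, which
vanishes when `μ S = 0`.
-/

universe u

section

variable {X : Type u} [MetricSpace X]

theorem ediam_closedBall_le_ofReal (x : X) (r : ℝ) :
    ediam (closedBall x r) ≤ ENNReal.ofReal (2 * r) :=
  ediam_le_of_forall_dist_le fun a ha b hb => by
    linarith [dist_triangle_right a b x, mem_closedBall.1 ha, mem_closedBall.1 hb]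

variable [MeasurableSpace X]

theorem hausdorffMeasure_le_of_forall_countable_cover [BorelSpace X] (d : ℝ) (s : Set X)
    (b : ℝ≥0∞)
    (h : ∀ ρ > (0 : ℝ), ∃ (ι : Type u) (_ : Countable ι) (t : ι → Set X),
      s ⊆ ⋃ i, t i ∧ (∀ i, ediam (t i) ≤ ENNReal.ofReal ρ) ∧ ∑' i, ediam (t i) ^ d ≤ b) :
    μH[d] s ≤ b := by
  choose ι hι t hcov hdiam hsum using fun m : ℕ => h (1 / (m + 1)) Nat.one_div_pos_of_nat
  have hρ : Tendsto (fun m : ℕ => ENNReal.ofReal (1 / (m + 1))) atTop (𝓝 0) := by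
    simpa using (ENNReal.tendsto_ofReal tendsto_one_div_add_atTop_nhds_zero_nat)
  calc μH[d] s ≤ liminf (fun m => ∑' i, ediam (t m i) ^ d) atTop :=
        Measure.hausdorffMeasure_le_liminf_tsum d s _ hρ t (.of_forall hdiam) (.of_forall hcov)
    _ ≤ b := liminf_le_of_frequently_le' (.of_forall hsum)

variable (μ : Measure X) {k c δ : ℝ} {T : Set X}

theorem ofReal_le_measure_closedBall_of_mem_closure
    (hT : ∀ y ∈ T, ∀ ρ ∈ Ioo (0 : ℝ) δ, ENNReal.ofReal (c * ρ ^ k) ≤ μ (ball y ρ))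
    {x : X} (hx : x ∈ closure T) {r : ℝ} (hr : r ∈ Ioo 0 (2 * δ)) :
    ENNReal.ofReal (c * (r / 2) ^ k) ≤ μ (closedBall x r) := by
  obtain ⟨y, hyT, hxy⟩ := mem_closure_iff.1 hx (r / 2) (by linarith [hr.1])
  have hball : ball y (r / 2) ⊆ closedBall x r := fun z hz => mem_closedBall.2 <| by
    linarith [dist_triangle z y x, mem_ball.1 hz, dist_comm x y]
  exact (hT y hyT (r / 2) ⟨by linarith [hr.1], by linarith [hr.2]⟩).trans (measure_mono hball)

theorem ediam_closedBall_rpow_le_mul_measure (hk : 0 ≤ k) (hc : 0 < c)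
    (hT : ∀ y ∈ T, ∀ ρ ∈ Ioo (0 : ℝ) δ, ENNReal.ofReal (c * ρ ^ k) ≤ μ (ball y ρ))
    {x : X} (hx : x ∈ closure T) {r : ℝ} (hr : r ∈ Ioo 0 (2 * δ)) :
    ediam (closedBall x r) ^ k ≤ ENNReal.ofReal (4 ^ k / c) * μ (closedBall x r) := by
  have hfactor : (2 * r) ^ k = 4 ^ k / c * (c * (r / 2) ^ k) := by
    rw [show 2 * r = 4 * (r / 2) by ring, Real.mul_rpow (by norm_num) (by linarith [hr.1])]
    field_simp
  calc ediam (closedBall x r) ^ k ≤ ENNReal.ofReal (2 * r) ^ k :=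
        ENNReal.rpow_le_rpow (ediam_closedBall_le_ofReal x r) hk
    _ = ENNReal.ofReal (4 ^ k / c) * ENNReal.ofReal (c * (r / 2) ^ k) := by
        rw [ENNReal.ofReal_rpow_of_nonneg (by linarith [hr.1]) hk, hfactor,
          ENNReal.ofReal_mul (by positivity)]
    _ ≤ ENNReal.ofReal (4 ^ k / c) * μ (closedBall x r) :=
        mul_le_mul_right (ofReal_le_measure_closedBall_of_mem_closure μ hT hx hr) _

theorem hausdorffMeasure_le_mul_measure_of_subset_closure [SecondCountableTopology X]
    [BorelSpace X] [HasBesicovitchCovering X] [SFinite μ] [μ.OuterRegular]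
    (hk : 0 ≤ k) (hc : 0 < c) (hδ : 0 < δ)
    (hT : ∀ y ∈ T, ∀ ρ ∈ Ioo (0 : ℝ) δ, ENNReal.ofReal (c * ρ ^ k) ≤ μ (ball y ρ))
    {S : Set X} (hS : S ⊆ closure T) :
    μH[k] S ≤ ENNReal.ofReal (4 ^ k / c) * μ S := by
  set C := ENNReal.ofReal (4 ^ k / c)
  have hC : C ≠ 0 := (ENNReal.ofReal_pos.2 (by positivity)).ne'
  refine ENNReal.le_of_forall_pos_le_add fun ε hε _ => ?_
  refine hausdorffMeasure_le_of_forall_countable_cover k S _ fun ρ hρ => ?_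
  obtain ⟨t, r, htc, htS, hr, hcov, hsum⟩ :=
    Besicovitch.exists_closedBall_covering_tsum_measure_le μ (ε := ε / C)
      (ENNReal.div_pos (by exact_mod_cast hε.ne') ENNReal.ofReal_ne_top).ne'
      (fun _ => Ioo 0 (min (ρ / 2) (2 * δ))) S fun _ _ d hd => by
        rw [Ioo_inter_Ioo, max_self]
        exact nonempty_Ioo.2 (lt_min (lt_min (by linarith) (by linarith)) hd)
  have hr' : ∀ x ∈ t, r x ∈ Ioo 0 (2 * δ) := fun x hx =>
    ⟨(hr x hx).1, (hr x hx).2.trans_le (min_le_right _ _)⟩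
  refine ⟨t, htc.to_subtype, fun x => closedBall x (r x), by rwa [iUnion_subtype],
    fun x => (ediam_closedBall_le_ofReal _ _).trans (ENNReal.ofReal_le_ofReal ?_), ?_⟩
  · linarith [(hr x x.2).2.trans_le (min_le_left _ _)]
  calc ∑' x : t, ediam (closedBall (x : X) (r x)) ^ k
      ≤ ∑' x : t, C * μ (closedBall x (r x)) := ENNReal.tsum_le_tsum fun x =>
        ediam_closedBall_rpow_le_mul_measure μ hk hc hT (hS (htS x.2)) (hr' x x.2)
    _ = C * ∑' x : t, μ (closedBall x (r x)) := ENNReal.tsum_mul_left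
    _ ≤ C * (μ S + ε / C) := by gcongr
    _ = C * μ S + ε := by rw [mul_add, ENNReal.mul_div_cancel hC ENNReal.ofReal_ne_top]

end

/-- Covering lemma for the singular set: if `μ` is a locally finite outer
regular Borel measure on `ℝⁿ`, `k > 0`, and `μ(B_ρ(y)) ≥ c ρ^k` for all `y ∈ T`
and `ρ ∈ (0,δ)`, then every subset `S` of the closure of `T` with `μ(S) = 0`
has vanishing `k`-dimensional Hausdorff measure. -/
theorem stmt11 {n : ℕ} (μ : Measure (EuclideanSpace ℝ (Fin n)))
    [IsLocallyFiniteMeasure μ] [μ.OuterRegular]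
    (k : ℝ) (hk : 0 < k) (c δ : ℝ) (hc : 0 < c) (hδ : 0 < δ)
    (T : Set (EuclideanSpace ℝ (Fin n)))
    (hT : ∀ y ∈ T, ∀ ρ ∈ Set.Ioo (0 : ℝ) δ,
      ENNReal.ofReal (c * ρ ^ k) ≤ μ (Metric.ball y ρ))
    (S : Set (EuclideanSpace ℝ (Fin n))) (hS : S ⊆ closure T) (hμS : μ S = 0) :
    μH[k] S = 0 := by
  have hbound := hausdorffMeasure_le_mul_measure_of_subset_closure μ hk.le hc hδ hT hS
  rwa [hμS, mul_zero, nonpos_iff_eq_zero] at hbound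
end
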